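/- The interaction energy between an alternating spin configuration on an interval {1,...,L₀} and an arbitrary configuration on {L₀+1, L₀+2, ...} is uniformly bounded: there exists a constant C (independent of L₀ and of the exterior configuration ω) such that |∑_{i=1}^{L₀} ∑_{k > L₀} |k-i|^{-α} (-1)^i ω_k| ≤ C, for any α > 1 and any ω ∈ {-1,1}^ℤ. -/
import Mathlib

open Finset

private lemma alt_aux (a : ℕ → ℝ) (hmono : Monotone a) (h0 : 0 ≤ a 0) (L : ℕ) :
    (Even L → 0 ≤ (∑ i ∈ Finset.Icc 1 L, (-1:ℝ)^i * a i) ∧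
        (∑ i ∈ Finset.Icc 1 L, (-1:ℝ)^i * a i) ≤ a L) ∧
    (¬ Even L → -(a L) ≤ (∑ i ∈ Finset.Icc 1 L, (-1:ℝ)^i * a i) ∧
        (∑ i ∈ Finset.Icc 1 L, (-1:ℝ)^i * a i) ≤ 0) := by
  induction L with
  | zero =>
    refine ⟨fun _ => ?_, fun h => absurd Even.zero h⟩
    simpa using h0
  | succ L ih =>
    have hs : ∑ i ∈ Finset.Icc 1 (L+1), (-1:ℝ)^i * a i
        = (∑ i ∈ Finset.Icc 1 L, (-1:ℝ)^i * a i) + (-1:ℝ)^(L+1) * a (L+1) :=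
      Finset.sum_Icc_succ_top (by omega) _
    have hmLL : a L ≤ a (L+1) := hmono (by omega)
    have h0L : 0 ≤ a L := h0.trans (hmono (by omega))
    rcases Nat.even_or_odd L with he | ho
    · have h1 : ((-1:ℝ))^(L+1) = -1 := by
        rw [pow_succ, he.neg_one_pow]; ring
      have hL := ih.1 he
      constructor
      · intro hcon; exact absurd (Nat.even_add_one.mp hcon) (by simpa using he)
      · intro _; rw [hs, h1]
        constructor <;> nlinarith [hL.1, hL.2]
    · have h1 : ((-1:ℝ))^(L+1) = 1 := by
        rw [pow_succ, ho.neg_one_pow]; ring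
      have hL := ih.2 (Nat.not_even_iff_odd.mpr ho)
      constructor
      · intro _; rw [hs, h1]
        constructor <;> nlinarith [hL.1, hL.2]
      · intro hcon
        exact absurd (Nat.even_add_one.mpr (Nat.not_even_iff_odd.mpr ho)) hcon

private lemma alt_abs_le (a : ℕ → ℝ) (hmono : Monotone a) (h0 : 0 ≤ a 0) (L : ℕ) :
    |∑ i ∈ Finset.Icc 1 L, (-1:ℝ)^i * a i| ≤ a L := by
  have h := alt_aux a hmono h0 L
  have h0L : 0 ≤ a L := h0.trans (hmono (by omega))
  rcases Nat.even_or_odd L with he | ho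
  · rcases h.1 he with ⟨h1, h2⟩; rw [abs_le]; constructor <;> linarith
  · rcases h.2 (Nat.not_even_iff_odd.mpr ho) with ⟨h1, h2⟩
    rw [abs_le]; constructor <;> linarith

/-- equivalence between ℕ and integers greater than L₀ -/
private def shiftEquiv' (L₀ : ℕ) : ℕ ≃ {k : ℤ // (L₀ : ℤ) < k} where
  toFun n := ⟨(L₀ : ℤ) + 1 + n, by omega⟩
  invFun k := (k.1 - L₀ - 1).toNat
  left_inv n := by
    show ((L₀ : ℤ) + 1 + n - L₀ - 1).toNat = n
    omega
  right_inv k := Subtype.ext (by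
    show (L₀ : ℤ) + 1 + ((k.1 - L₀ - 1).toNat : ℤ) = k.1
    have := k.2; omega)

/-- The interaction energy between an alternating spin configuration on
`{1,…,L₀}` and an arbitrary `±1` configuration on `{L₀+1, L₀+2, …}` is bounded
uniformly in `L₀` and in the exterior configuration `ω`. -/
theorem stmt3 (α : ℝ) (hα : 1 < α) :
    ∃ C : ℝ, ∀ (L₀ : ℕ) (ω : ℤ → ℝ), (∀ k, ω k = 1 ∨ ω k = -1) →
      |∑ i ∈ Finset.Icc 1 L₀,
        ∑' k : {k : ℤ // (L₀ : ℤ) < k},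
          (|(k : ℤ) - (i : ℤ)| : ℝ) ^ (-α) * (-1 : ℝ) ^ (i : ℕ) * ω k| ≤ C := by
  have hbase : Summable (fun n : ℕ => ((n : ℝ) + 1) ^ (-α)) := by
    have h1 : Summable (fun n : ℕ => ((n : ℝ)) ^ (-α)) :=
      Real.summable_nat_rpow.mpr (by linarith)
    have h2 := h1.comp_injective (add_left_injective 1)
    have h3 : (fun n : ℕ => ((n : ℝ) + 1) ^ (-α))
        = (fun n : ℕ => ((n : ℝ)) ^ (-α)) ∘ (fun x => x + 1) := by
      funext n; simp [Function.comp]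
    rw [h3]; exact h2
  refine ⟨∑' n : ℕ, ((n : ℝ) + 1) ^ (-α), ?_⟩
  intro L₀ ω hω
  set e := shiftEquiv' L₀ with he
  have habsω : ∀ k, |ω k| = 1 := by
    intro k; rcases hω k with h | h <;> simp [h]
  set g : ℕ → ℕ → ℝ := fun i n =>
    ((L₀ : ℝ) + 1 + n - i) ^ (-α) * (-1 : ℝ) ^ i * ω ((L₀ : ℤ) + 1 + n) with hg
  have hrw : ∀ i ∈ Finset.Icc 1 L₀,
      ∑' k : {k : ℤ // (L₀ : ℤ) < k},
        (|(k : ℤ) - (i : ℤ)| : ℝ) ^ (-α) * (-1 : ℝ) ^ i * ω k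
      = ∑' n : ℕ, g i n := by
    intro i hi
    simp only [Finset.mem_Icc] at hi
    rw [← e.tsum_eq]
    apply tsum_congr
    intro n
    have hval : ((e n : ℤ)) = (L₀ : ℤ) + 1 + n := rfl
    rw [hg]
    simp only [hval]
    have hc : (i : ℝ) ≤ (L₀ : ℝ) := by exact_mod_cast hi.2
    have hn0 : (0:ℝ) ≤ (n : ℝ) := Nat.cast_nonneg n
    have hnn : (0:ℝ) ≤ (L₀ : ℝ) + 1 + n - i := by linarith
    push_cast
    rw [abs_of_nonneg hnn]
  rw [Finset.sum_congr rfl hrw]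
  -- absolute value of g
  have habs : ∀ i n : ℕ, 1 ≤ i → i ≤ L₀ → |g i n| = ((L₀ : ℝ) + 1 + n - i) ^ (-α) := by
    intro i n h1 h2
    have hc : (i:ℝ) ≤ L₀ := by exact_mod_cast h2
    have hnn : (0:ℝ) ≤ (L₀ : ℝ) + 1 + n - i := by linarith
    rw [hg]
    simp only [abs_mul, abs_pow, abs_neg, abs_one, one_pow, mul_one, habsω]
    rw [abs_of_nonneg (Real.rpow_nonneg hnn _)]
  have hle : ∀ i n : ℕ, 1 ≤ i → i ≤ L₀ →
      ((L₀ : ℝ) + 1 + n - i) ^ (-α) ≤ ((n : ℝ) + 1) ^ (-α) := by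
    intro i n h1 h2
    have hc : (i:ℝ) ≤ L₀ := by exact_mod_cast h2
    have hn0 : (0:ℝ) ≤ (n : ℝ) := Nat.cast_nonneg n
    apply Real.rpow_le_rpow_of_nonpos (by linarith) (by linarith) (by linarith)
  have hgsum : ∀ i ∈ Finset.Icc 1 L₀, Summable (g i) := by
    intro i hi
    simp only [Finset.mem_Icc] at hi
    apply Summable.of_abs
    apply Summable.of_nonneg_of_le (fun n => abs_nonneg _) _ hbase
    intro n
    rw [habs i n hi.1 hi.2]
    exact hle i n hi.1 hi.2
  rw [← Summable.tsum_finsetSum hgsum]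
  -- key cancellation bound
  have hkey : ∀ n : ℕ, |∑ i ∈ Finset.Icc 1 L₀, g i n| ≤ ((n : ℝ) + 1) ^ (-α) := by
    intro n
    set a : ℕ → ℝ := fun i => ((L₀ : ℝ) + 1 + n - (min i L₀ : ℕ)) ^ (-α) with ha
    have hmono : Monotone a := by
      intro i j hij
      have hb1 : ((min j L₀ : ℕ) : ℝ) ≤ (L₀ : ℝ) := Nat.cast_le.mpr (min_le_right j L₀)
      have hb2 : ((min i L₀ : ℕ) : ℝ) ≤ ((min j L₀ : ℕ) : ℝ) :=
        Nat.cast_le.mpr (min_le_min hij (le_refl L₀))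
      exact Real.rpow_le_rpow_of_nonpos (by linarith) (by linarith) (by linarith)
    have h0 : 0 ≤ a 0 := Real.rpow_nonneg (by
      have h' : ((min 0 L₀ : ℕ) : ℝ) = 0 := by norm_num
      have hL0 : (0:ℝ) ≤ (L₀ : ℝ) := Nat.cast_nonneg L₀
      have hn0 : (0:ℝ) ≤ (n : ℝ) := Nat.cast_nonneg n
      rw [h']; linarith) _
    have haL : a L₀ = ((n : ℝ) + 1) ^ (-α) := by
      rw [ha]; simp only [min_self]; congr 1; ring
    have hsum_eq : ∑ i ∈ Finset.Icc 1 L₀, g i n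
        = (∑ i ∈ Finset.Icc 1 L₀, (-1:ℝ)^i * a i) * ω ((L₀ : ℤ) + 1 + n) := by
      rw [Finset.sum_mul]
      apply Finset.sum_congr rfl
      intro i hi
      simp only [Finset.mem_Icc] at hi
      have hmin : min i L₀ = i := min_eq_left hi.2
      rw [hg, ha]
      simp only [hmin]
      ring
    rw [hsum_eq, abs_mul, habsω, mul_one, ← haL]
    exact alt_abs_le a hmono h0 L₀
  have hsumg : Summable (fun n => ∑ i ∈ Finset.Icc 1 L₀, g i n) :=
    Summable.of_abs (Summable.of_nonneg_of_le (fun n => abs_nonneg _) hkey hbase)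
  calc |∑' n : ℕ, ∑ i ∈ Finset.Icc 1 L₀, g i n|
      ≤ ∑' n : ℕ, |∑ i ∈ Finset.Icc 1 L₀, g i n| := by
        simpa [Real.norm_eq_abs] using
          norm_tsum_le_tsum_norm (f := fun n => ∑ i ∈ Finset.Icc 1 L₀, g i n)
            (by simpa [Real.norm_eq_abs] using hsumg.abs)
    _ ≤ ∑' n : ℕ, ((n : ℝ) + 1) ^ (-α) := Summable.tsum_le_tsum hkey hsumg.abs hbase
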